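/- Let σ > 0 and μ ∈ ℝ be constants. For every t > 0 there exists a constant c > 0 such that for all m ≥ m₀ and all grid points x, y of A_m (regarded as grid points of A_{m+1} via the index map i ↦ 2i), the semidiscrete kernels at consecutive resolutions satisfy |u_m(x, y; t) − u_{m+1}(x, y; t)| ≤ c·h_m². -/

import Mathlib

/-- Grid step `h_m = L·2^{-m}`. -/
noncomputable def hstep (L : ℝ) (m : ℕ) : ℝ := L / 2 ^ m

/-- Real position of the `i`-th grid point of `A_m`: `x_i = -L + i·h_m`. -/
noncomputable def gridPos (L : ℝ) (m : ℕ) (i : ZMod (2 ^ (m + 1))) : ℝ :=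
  -L + (i.val : ℝ) * hstep L m

/-- The discrete generator `𝓛^m`: tridiagonal (periodic) matrix with
`𝓛^m(x, x±h_m) = σ(x)²/(2h_m²) ± μ(x)/(2h_m)`, `𝓛^m(x,x) = -σ(x)²/h_m²`, `0` otherwise. -/
noncomputable def gen (L : ℝ) (σ μ : ℝ → ℝ) (m : ℕ) :
    Matrix (ZMod (2 ^ (m + 1))) (ZMod (2 ^ (m + 1))) ℝ :=
  fun x y =>
    (if y = x + 1 then
        (σ (gridPos L m x)) ^ 2 / (2 * hstep L m ^ 2) + μ (gridPos L m x) / (2 * hstep L m)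
      else 0)
    + (if y = x - 1 then
        (σ (gridPos L m x)) ^ 2 / (2 * hstep L m ^ 2) - μ (gridPos L m x) / (2 * hstep L m)
      else 0)
    + (if y = x then -(σ (gridPos L m x)) ^ 2 / hstep L m ^ 2 else 0)

/-- The semidiscrete kernel `u_m(x, y; t) = h_m⁻¹·(exp(t·𝓛^m))(x, y)`. -/
noncomputable def kernel (L : ℝ) (σ μ : ℝ → ℝ) (m : ℕ) (t : ℝ)
    (x y : ZMod (2 ^ (m + 1))) : ℝ :=
  (hstep L m)⁻¹ * NormedSpace.exp (t • gen L σ μ m) x y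

/-- The time derivative of the semidiscrete kernel,
`∂_t u_m(x, y; t) = h_m⁻¹·(𝓛^m · exp(t·𝓛^m))(x, y)`. -/
noncomputable def dtKernel (L : ℝ) (σ μ : ℝ → ℝ) (m : ℕ) (t : ℝ)
    (x y : ZMod (2 ^ (m + 1))) : ℝ :=
  (hstep L m)⁻¹ * (gen L σ μ m * NormedSpace.exp (t • gen L σ μ m)) x y

/-- The index map regarding a grid point of `A_m` as a grid point of `A_{m'}`:
`i ↦ 2^{m'-m}·i`. -/
def embed (m m' : ℕ) (x : ZMod (2 ^ (m + 1))) : ZMod (2 ^ (m' + 1)) :=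
  ((2 ^ (m' - m) * x.val : ℕ) : ZMod (2 ^ (m' + 1)))

/-- The periodic distance `d(x,y) = min_{n∈ℤ} |x - y - 2Ln|`. -/
noncomputable def dPer (L x y : ℝ) : ℝ := ⨅ n : ℤ, |x - y - 2 * L * (n : ℝ)|

/-!
Both kernels are diagonalised by the discrete Fourier transform on `ZMod N`: the mode
`j ↦ e^{ijθ}` with `θ = 2πk/N` is an eigenvector of the generator with step `h`, with eigenvalue
`λ_h(θ) = σ²(cos θ - 1)/h² + iμ sin θ/h`, so
`u_m(x, y; t) = (2L)⁻¹ ∑_{k<N} exp(t λ_h(2πk/N)) e^{2πik(x-y)/N}`.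
Restricted to the coarse grid, the fine modes `k` and `k + N` coincide, so `u_m - u_{m+1}` is a
sum over coarse frequencies of `exp(t λ_h(θ)) - exp(t λ_{h/2}(θ/2)) - exp(t λ_{h/2}(θ/2 + π))`.
After a shift of `θ` by `2π`, one fine mode matches the coarse one: the two symbols differ by
`O(h² (ξ⁴ + |ξ|³))` with `ξ = θ/h`, while both have real part `≤ -2σ²ξ²/π²`, so the difference is
`O(t h² e^{-cξ²} ξ⁴)`, which is summable in the frequency. The other fine mode has `cos ≤ 0`,
hence is `O(e^{-4tσ²/h²})`, and `N = 2L/h` such terms are still `O(h²)`.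
-/

open Finset Real
open scoped Complex

lemma Complex.norm_exp_sub_exp_le (z w : ℂ) :
    ‖cexp z - cexp w‖ ≤ Real.exp (max z.re w.re) * ‖z - w‖ := by
  have hz : z ∈ {v : ℂ | v.re ≤ max z.re w.re} := le_max_left z.re w.re
  have hw : w ∈ {v : ℂ | v.re ≤ max z.re w.re} := le_max_right z.re w.re
  refine (convex_halfSpace_re_le _).norm_image_sub_le_of_norm_deriv_le
    (fun v _ => Complex.differentiableAt_exp) (fun v hv => ?_) hw hz
  rw [Complex.deriv_exp, Complex.norm_exp]
  exact Real.exp_le_exp.mpr hv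

lemma Real.exp_neg_le_factorial_div_pow {z : ℝ} (hz : 0 < z) (n : ℕ) :
    Real.exp (-z) ≤ n.factorial / z ^ n := by
  rw [Real.exp_neg, inv_le_comm₀ (Real.exp_pos z) (by positivity), inv_div]
  exact pow_div_factorial_le_exp z hz.le n

lemma exp_neg_mul_sq_mul_pow_four_le {a ξ : ℝ} (ha : 0 < a) (hξ : ξ ≠ 0) :
    Real.exp (-a * ξ ^ 2) * ξ ^ 4 ≤ 6 / (a ^ 3 * ξ ^ 2) := by
  have h := Real.exp_neg_le_factorial_div_pow (z := a * ξ ^ 2) (by positivity) 3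
  rw [neg_mul]
  calc Real.exp (-(a * ξ ^ 2)) * ξ ^ 4 ≤ (Nat.factorial 3 : ℝ) / (a * ξ ^ 2) ^ 3 * ξ ^ 4 := by
        gcongr
    _ = 6 / (a ^ 3 * ξ ^ 2) := by
        rw [show (Nat.factorial 3 : ℝ) = 6 by norm_num [Nat.factorial]]
        field_simp

lemma sum_range_inv_sq_le (N : ℕ) : ∑ k ∈ range N, ((k : ℝ) ^ 2)⁻¹ ≤ 2 := by
  have hsub : Ioo 0 N ⊆ range N := fun k hk => mem_range.mpr (mem_Ioo.mp hk).2
  rw [← sum_subset hsub fun k hk hk' => ?_]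
  · simpa using sum_Ioo_inv_sq_le (α := ℝ) 0 N
  · obtain rfl : k = 0 := by simp_all
    simp

lemma sum_range_inv_sq_add_inv_sq_sub_le (N : ℕ) :
    ∑ k ∈ range N, (((k : ℝ) ^ 2)⁻¹ + (((N - k : ℕ) : ℝ) ^ 2)⁻¹) ≤ 4 := by
  have hrefl : ∑ k ∈ range N, (((N - k : ℕ) : ℝ) ^ 2)⁻¹ = ∑ k ∈ range (N + 1), ((k : ℝ) ^ 2)⁻¹ := by
    rw [← sum_range_reflect, sum_range_succ', Nat.cast_zero, zero_pow two_ne_zero, inv_zero,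
      add_zero]
    refine sum_congr rfl fun k hk => ?_
    rw [show N - (N - 1 - k) = k + 1 by have := mem_range.mp hk; omega]
  rw [sum_add_distrib, hrefl]
  linarith [sum_range_inv_sq_le N, sum_range_inv_sq_le (N + 1)]

open scoped Matrix.Norms.Operator in
lemma Matrix.exp_map_ofReal {n : Type*} [Fintype n] [DecidableEq n] (A : Matrix n n ℝ) :
    (NormedSpace.exp A).map ((↑) : ℝ → ℂ) = NormedSpace.exp (A.map (↑)) :=
  NormedSpace.map_exp (Complex.ofRealHom.mapMatrix : Matrix n n ℝ →+* Matrix n n ℂ)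
    (continuous_id.matrix_map Complex.continuous_ofReal) A

section Circulant

variable {N : ℕ} [NeZero N]

def periodicTridiag (N : ℕ) (a b c : ℝ) : Matrix (ZMod N) (ZMod N) ℝ := fun x y =>
  (if y = x + 1 then a else 0) + (if y = x - 1 then b else 0) + (if y = x then c else 0)

noncomputable def tridiagSymbol (a b c : ℝ) (k : ZMod N) : ℂ :=
  a * ZMod.stdAddChar k + b * ZMod.stdAddChar (-k) + c

noncomputable def fourierMatrix (N : ℕ) [NeZero N] : Matrix (ZMod N) (ZMod N) ℂ :=
  fun j k => ZMod.stdAddChar (j * k)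

noncomputable def invFourierMatrix (N : ℕ) [NeZero N] : Matrix (ZMod N) (ZMod N) ℂ :=
  fun j k => (N : ℂ)⁻¹ * ZMod.stdAddChar (-(j * k))

lemma sum_stdAddChar_mul (d : ZMod N) :
    ∑ k : ZMod N, ZMod.stdAddChar (k * d) = if d = 0 then (N : ℂ) else 0 := by
  rw [AddChar.sum_mulShift d (ZMod.isPrimitive_stdAddChar N), ZMod.card]
  push_cast; rfl

lemma fourierMatrix_mul_diagonal_mul_apply (v : ZMod N → ℂ) (x y : ZMod N) :
    (fourierMatrix N * Matrix.diagonal v * invFourierMatrix N) x y =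
      (N : ℂ)⁻¹ * ∑ k, v k * ZMod.stdAddChar (k * (x - y)) := by
  rw [Matrix.mul_apply, mul_sum]
  simp only [Matrix.mul_diagonal, fourierMatrix, invFourierMatrix]
  refine sum_congr rfl fun k _ => ?_
  rw [mul_sub, sub_eq_add_neg, AddChar.map_add_eq_mul, mul_comm k x]
  ring

lemma fourierMatrix_mul_invFourierMatrix : fourierMatrix N * invFourierMatrix N = 1 := by
  ext x y
  have h := fourierMatrix_mul_diagonal_mul_apply (fun _ => 1) x y
  rw [Matrix.diagonal_one, Matrix.mul_one] at h
  simp only [one_mul, sum_stdAddChar_mul, sub_eq_zero] at h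
  rw [h, Matrix.one_apply]
  split_ifs <;> simp [NeZero.ne]

lemma periodicTridiag_map_ofReal (a b c : ℝ) :
    (periodicTridiag N a b c).map ((↑) : ℝ → ℂ) =
      fourierMatrix N * Matrix.diagonal (tridiagSymbol a b c) * invFourierMatrix N := by
  ext x y
  have hN : (N : ℂ) ≠ 0 := Nat.cast_ne_zero.mpr (NeZero.ne N)
  have hplus (k : ZMod N) : ZMod.stdAddChar k * ZMod.stdAddChar (k * (x - y)) =
      ZMod.stdAddChar (k * (x - y + 1)) := by
    rw [← AddChar.map_add_eq_mul]; ring_nf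
  have hminus (k : ZMod N) : ZMod.stdAddChar (-k) * ZMod.stdAddChar (k * (x - y)) =
      ZMod.stdAddChar (k * (x - y - 1)) := by
    rw [← AddChar.map_add_eq_mul]; ring_nf
  rw [Matrix.map_apply, fourierMatrix_mul_diagonal_mul_apply]
  simp only [tridiagSymbol, add_mul, sum_add_distrib, mul_assoc, hplus, hminus, ← mul_sum,
    sum_stdAddChar_mul, periodicTridiag]
  have e₁ : x - y + 1 = 0 ↔ y = x + 1 :=
    ⟨fun h => by linear_combination -h, fun h => by linear_combination -h⟩
  have e₂ : x - y - 1 = 0 ↔ y = x - 1 :=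
    ⟨fun h => by linear_combination -h, fun h => by linear_combination -h⟩
  simp only [e₁, e₂, sub_eq_zero, eq_comm (a := x)]
  split_ifs <;> push_cast <;> field_simp <;> ring

lemma exp_periodicTridiag_apply (a b c t : ℝ) (x y : ZMod N) :
    (NormedSpace.exp (t • periodicTridiag N a b c) x y : ℂ) =
      (N : ℂ)⁻¹ * ∑ k, cexp (t * tridiagSymbol a b c k) * ZMod.stdAddChar (k * (x - y)) := by
  let D := Matrix.diagonal fun k : ZMod N => (t : ℂ) * tridiagSymbol a b c k
  have hconj : (t • periodicTridiag N a b c).map ((↑) : ℝ → ℂ) =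
      fourierMatrix N * D * invFourierMatrix N := by
    have hD : D = (t : ℂ) • Matrix.diagonal (tridiagSymbol a b c) := by
      rw [← Matrix.diagonal_smul]; rfl
    rw [Matrix.map_smul' _ _ _ Complex.ofReal_mul, periodicTridiag_map_ofReal, hD,
      Matrix.mul_smul, Matrix.smul_mul]
  have hexp : NormedSpace.exp (fourierMatrix N * D * invFourierMatrix N) =
      fourierMatrix N * NormedSpace.exp D * invFourierMatrix N :=
    Matrix.exp_units_conj ⟨fourierMatrix N, invFourierMatrix N, fourierMatrix_mul_invFourierMatrix,
      mul_eq_one_comm.mp fourierMatrix_mul_invFourierMatrix⟩ D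
  rw [← Matrix.map_apply (f := ((↑) : ℝ → ℂ)), Matrix.exp_map_ofReal, hconj, hexp,
    Matrix.exp_diagonal, fourierMatrix_mul_diagonal_mul_apply, Pi.exp_def,
    ← Complex.exp_eq_exp_ℂ]

lemma sum_zmod_eq_sum_range {M : Type*} [AddCommMonoid M] (f : ZMod N → M) :
    ∑ k, f k = ∑ i ∈ range N, f i :=
  sum_nbij' ZMod.val (↑) (fun k _ => mem_range.mpr k.val_lt) (fun _ _ => mem_univ _)
    (fun k _ => ZMod.natCast_zmod_val k) (fun _ hi => ZMod.val_cast_of_lt (mem_range.mp hi))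
    (fun k _ => by rw [ZMod.natCast_zmod_val])

lemma stdAddChar_eq_cexp (k : ZMod N) :
    ZMod.stdAddChar k = cexp ((2 * π * k.val / N : ℝ) * Complex.I) := by
  rw [ZMod.stdAddChar_apply, ZMod.toCircle_apply]
  push_cast; ring_nf

/-- The eigenvalue of the constant-coefficient generator with step `h` on the Fourier mode
`j ↦ e^{ijθ}`. -/
noncomputable def genSymbol (σ μ h θ : ℝ) : ℂ :=
  ((σ ^ 2 * (cos θ - 1) / h ^ 2 : ℝ) : ℂ) + ((μ * sin θ / h : ℝ) : ℂ) * Complex.I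

lemma tridiagSymbol_eq_genSymbol (σ μ h : ℝ) (k : ZMod N) :
    tridiagSymbol (σ ^ 2 / (2 * h ^ 2) + μ / (2 * h)) (σ ^ 2 / (2 * h ^ 2) - μ / (2 * h))
      (-σ ^ 2 / h ^ 2) k = genSymbol σ μ h (2 * π * k.val / N) := by
  rw [tridiagSymbol, AddChar.map_neg_eq_inv, stdAddChar_eq_cexp, ← Complex.exp_neg]
  rw [← neg_mul, ← Complex.ofReal_neg, Complex.exp_mul_I, Complex.exp_mul_I, ← Complex.ofReal_cos,
    ← Complex.ofReal_sin, ← Complex.ofReal_cos, ← Complex.ofReal_sin, cos_neg, sin_neg, genSymbol]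
  push_cast
  ring

end Circulant

lemma re_mul_genSymbol (σ μ t h θ : ℝ) :
    ((t : ℂ) * genSymbol σ μ h θ).re = t * (σ ^ 2 * (cos θ - 1) / h ^ 2) := by
  simp only [genSymbol, Complex.re_ofReal_mul, Complex.add_re, Complex.ofReal_re,
    Complex.mul_I_re, Complex.ofReal_im, neg_zero, add_zero]

lemma norm_cexp_mul_genSymbol_le_of_cos_nonpos {σ μ t h θ : ℝ} (ht : 0 ≤ t) (hcos : cos θ ≤ 0) :
    ‖cexp (t * genSymbol σ μ h θ)‖ ≤ Real.exp (-(t * σ ^ 2 / h ^ 2)) := by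
  rw [Complex.norm_exp, re_mul_genSymbol, Real.exp_le_exp]
  have : σ ^ 2 * (cos θ - 1) / h ^ 2 ≤ σ ^ 2 * (-1) / h ^ 2 := by gcongr; linarith
  calc t * (σ ^ 2 * (cos θ - 1) / h ^ 2) ≤ t * (σ ^ 2 * (-1) / h ^ 2) := by gcongr
    _ = -(t * σ ^ 2 / h ^ 2) := by ring

lemma re_mul_genSymbol_le {σ μ t h θ : ℝ} (ht : 0 ≤ t) (hθ : |θ| ≤ π) :
    ((t : ℂ) * genSymbol σ μ h θ).re ≤ -(2 * t * σ ^ 2 / π ^ 2) * (θ / h) ^ 2 := by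
  rw [re_mul_genSymbol]
  have hcos : cos θ - 1 ≤ -(2 / π ^ 2 * θ ^ 2) := by linarith [cos_le_one_sub_mul_cos_sq hθ]
  calc t * (σ ^ 2 * (cos θ - 1) / h ^ 2) ≤ t * (σ ^ 2 * -(2 / π ^ 2 * θ ^ 2) / h ^ 2) := by
        gcongr
    _ = -(2 * t * σ ^ 2 / π ^ 2) * (θ / h) ^ 2 := by ring

lemma genSymbol_add_two_pi (σ μ h θ : ℝ) : genSymbol σ μ h (θ + 2 * π) = genSymbol σ μ h θ := by
  rw [genSymbol, genSymbol, cos_add_two_pi, sin_add_two_pi]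

lemma genSymbol_sub_genSymbol_half (σ μ h θ : ℝ) :
    genSymbol σ μ h θ - genSymbol σ μ (h / 2) (θ / 2) =
      ((2 * σ ^ 2 * (1 - cos (θ / 2)) ^ 2 / h ^ 2 : ℝ) : ℂ) +
        ((2 * μ * sin (θ / 2) * (cos (θ / 2) - 1) / h : ℝ) : ℂ) * Complex.I := by
  have hθ : θ = 2 * (θ / 2) := by ring
  rw [genSymbol, genSymbol, hθ, cos_two_mul, sin_two_mul, ← hθ]
  push_cast
  ring

lemma norm_genSymbol_sub_genSymbol_half_le (σ μ : ℝ) {h : ℝ} (hh : 0 < h) (θ : ℝ) :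
    ‖genSymbol σ μ h θ - genSymbol σ μ (h / 2) (θ / 2)‖ ≤
      σ ^ 2 * θ ^ 4 / (32 * h ^ 2) + |μ| * |θ| ^ 3 / (8 * h) := by
  have hc₀ : 0 ≤ 1 - cos (θ / 2) := by linarith [cos_le_one (θ / 2)]
  have hc : 1 - cos (θ / 2) ≤ θ ^ 2 / 8 := by
    linarith [one_sub_sq_div_two_le_cos (x := θ / 2)]
  have hs : |sin (θ / 2)| ≤ |θ| / 2 := by
    simpa [abs_div] using abs_sin_le_abs (x := θ / 2)
  rw [genSymbol_sub_genSymbol_half]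
  refine (norm_add_le _ _).trans (add_le_add ?_ ?_)
  · rw [Complex.norm_real, Real.norm_eq_abs, abs_of_nonneg (by positivity)]
    calc 2 * σ ^ 2 * (1 - cos (θ / 2)) ^ 2 / h ^ 2 ≤ 2 * σ ^ 2 * (θ ^ 2 / 8) ^ 2 / h ^ 2 := by
          gcongr
      _ = σ ^ 2 * θ ^ 4 / (32 * h ^ 2) := by ring
  · rw [norm_mul, Complex.norm_I, mul_one, Complex.norm_real, Real.norm_eq_abs, abs_div,
      abs_of_pos hh, abs_mul, abs_mul, abs_mul, abs_two, ← neg_sub, abs_neg, abs_of_nonneg hc₀]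
    calc 2 * |μ| * |sin (θ / 2)| * (1 - cos (θ / 2)) / h
          ≤ 2 * |μ| * (|θ| / 2) * (θ ^ 2 / 8) / h := by gcongr
      _ = |μ| * |θ| ^ 3 / (8 * h) := by rw [← sq_abs θ]; ring

noncomputable def halvingBound (σ μ t ξ : ℝ) : ℝ :=
  Real.exp (-(2 * t * σ ^ 2 / π ^ 2) * ξ ^ 2) * (σ ^ 2 * ξ ^ 4 / 32 + |μ| * |ξ| ^ 3 / 8)

lemma norm_cexp_genSymbol_sub_cexp_genSymbol_half_le {σ μ t h θ : ℝ} (ht : 0 ≤ t) (hh : 0 < h)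
    (hθ : |θ| ≤ π) :
    ‖cexp (t * genSymbol σ μ h θ) - cexp (t * genSymbol σ μ (h / 2) (θ / 2))‖ ≤
      t * h ^ 2 * halvingBound σ μ t (θ / h) := by
  have hθ₂ : |θ / 2| ≤ π := by rw [abs_div, abs_two]; linarith [abs_nonneg θ]
  have hre : max ((t : ℂ) * genSymbol σ μ h θ).re ((t : ℂ) * genSymbol σ μ (h / 2) (θ / 2)).re ≤
      -(2 * t * σ ^ 2 / π ^ 2) * (θ / h) ^ 2 := by
    have hξ : θ / 2 / (h / 2) = θ / h := by field_simp
    exact max_le (re_mul_genSymbol_le ht hθ) (hξ ▸ re_mul_genSymbol_le ht hθ₂)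
  have hdiff : ‖(t : ℂ) * genSymbol σ μ h θ - t * genSymbol σ μ (h / 2) (θ / 2)‖ ≤
      t * h ^ 2 * (σ ^ 2 * (θ / h) ^ 4 / 32 + |μ| * |θ / h| ^ 3 / 8) := by
    rw [← mul_sub, norm_mul, Complex.norm_real, Real.norm_eq_abs, abs_of_nonneg ht, abs_div,
      abs_of_pos hh, mul_assoc]
    gcongr
    refine (norm_genSymbol_sub_genSymbol_half_le σ μ hh θ).trans_eq ?_
    field_simp
  calc _ ≤ Real.exp (max ((t : ℂ) * genSymbol σ μ h θ).re
        ((t : ℂ) * genSymbol σ μ (h / 2) (θ / 2)).re) *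
        ‖(t : ℂ) * genSymbol σ μ h θ - t * genSymbol σ μ (h / 2) (θ / 2)‖ :=
        Complex.norm_exp_sub_exp_le _ _
    _ ≤ Real.exp (-(2 * t * σ ^ 2 / π ^ 2) * (θ / h) ^ 2) *
        (t * h ^ 2 * (σ ^ 2 * (θ / h) ^ 4 / 32 + |μ| * |θ / h| ^ 3 / 8)) := by gcongr
    _ = t * h ^ 2 * halvingBound σ μ t (θ / h) := by rw [halvingBound]; ring

lemma norm_cexp_genSymbol_half_le_of_cos_nonpos {σ μ t h θ : ℝ} (ht : 0 ≤ t) (hcos : cos θ ≤ 0) :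
    ‖cexp (t * genSymbol σ μ (h / 2) θ)‖ ≤ Real.exp (-(4 * t * σ ^ 2 / h ^ 2)) :=
  (norm_cexp_mul_genSymbol_le_of_cos_nonpos ht hcos).trans_eq (by ring_nf)

/-- The coarse mode of angle `θ` at step `h`, minus the two modes at step `h / 2` that coincide
with it on the coarse grid. -/
noncomputable def halvingDefect (σ μ t h θ : ℝ) : ℂ :=
  cexp (t * genSymbol σ μ h θ) - cexp (t * genSymbol σ μ (h / 2) (θ / 2)) -
    cexp (t * genSymbol σ μ (h / 2) (θ / 2 + π))

lemma norm_halvingDefect_le_of_le_pi {σ μ t h θ : ℝ} (ht : 0 ≤ t) (hh : 0 < h) (hθ₀ : 0 ≤ θ)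
    (hθ : θ ≤ π) :
    ‖halvingDefect σ μ t h θ‖ ≤
      t * h ^ 2 * halvingBound σ μ t (θ / h) + Real.exp (-(4 * t * σ ^ 2 / h ^ 2)) := by
  have hcos : cos (θ / 2 + π) ≤ 0 := by
    rw [cos_add_pi, neg_nonpos]
    exact cos_nonneg_of_mem_Icc ⟨by linarith [pi_pos], by linarith⟩
  exact (norm_sub_le _ _).trans (add_le_add
    (norm_cexp_genSymbol_sub_cexp_genSymbol_half_le ht hh (abs_le.mpr ⟨by linarith [pi_pos], hθ⟩))
    (norm_cexp_genSymbol_half_le_of_cos_nonpos ht hcos))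

lemma norm_halvingDefect_le_of_pi_le {σ μ t h θ : ℝ} (ht : 0 ≤ t) (hh : 0 < h) (hθ : π ≤ θ)
    (hθ₂ : θ ≤ 2 * π) :
    ‖halvingDefect σ μ t h θ‖ ≤
      t * h ^ 2 * halvingBound σ μ t ((θ - 2 * π) / h) + Real.exp (-(4 * t * σ ^ 2 / h ^ 2)) := by
  have hcos : cos (θ / 2) ≤ 0 :=
    cos_nonpos_of_pi_div_two_le_of_le (by linarith) (by linarith [pi_pos])
  have hφ : |θ - 2 * π| ≤ π := abs_le.mpr ⟨by linarith, by linarith⟩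
  -- the coarse mode aliases to `θ - 2π`, which the fine mode `θ / 2 + π` matches
  have hcoarse : genSymbol σ μ h θ = genSymbol σ μ h (θ - 2 * π) := by
    rw [← genSymbol_add_two_pi σ μ h (θ - 2 * π), sub_add_cancel]
  have hfine : genSymbol σ μ (h / 2) (θ / 2 + π) = genSymbol σ μ (h / 2) ((θ - 2 * π) / 2) := by
    rw [← genSymbol_add_two_pi σ μ (h / 2) ((θ - 2 * π) / 2)]; ring_nf
  rw [halvingDefect, sub_right_comm, hcoarse, hfine]
  exact (norm_sub_le _ _).trans
    (add_le_add (norm_cexp_genSymbol_sub_cexp_genSymbol_half_le ht hh hφ)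
      (norm_cexp_genSymbol_half_le_of_cos_nonpos ht hcos))

lemma exists_halvingBound_le (σ μ : ℝ) {t L : ℝ} (hσ : σ ≠ 0) (ht : 0 < t) (hL : 0 < L) :
    ∃ K ≥ 0, ∀ (j : ℕ) (ξ : ℝ), |ξ| = π * j / L → halvingBound σ μ t ξ ≤ K * ((j : ℝ) ^ 2)⁻¹ := by
  set a := 2 * t * σ ^ 2 / π ^ 2 with ha_def
  have ha : 0 < a := by positivity
  set C := σ ^ 2 / 32 + |μ| * L / (8 * π)
  refine ⟨6 * C * L ^ 2 / (a ^ 3 * π ^ 2), by positivity, fun j ξ hξ => ?_⟩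
  rcases Nat.eq_zero_or_pos j with rfl | hj
  -- here the right-hand side is the junk value `K * 0⁻¹ = 0`, and `halvingBound σ μ t 0 = 0`
  · rw [Nat.cast_zero, mul_zero, zero_div, abs_eq_zero] at hξ
    simp [halvingBound, hξ]
  have hξ₀ : π / L ≤ |ξ| := by
    rw [hξ]; gcongr; exact le_mul_of_one_le_right pi_pos.le (by exact_mod_cast hj)
  have hξne : ξ ≠ 0 := abs_pos.mp ((by positivity : 0 < π / L).trans_le hξ₀)
  have hcube : |ξ| ^ 3 ≤ ξ ^ 4 * (L / π) := by
    have h4 : ξ ^ 4 = |ξ| ^ 3 * |ξ| := by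
      rw [← pow_succ, pow_abs, abs_of_nonneg (by positivity : (0 : ℝ) ≤ ξ ^ 4)]
    have : 1 ≤ |ξ| * (L / π) :=
      calc 1 = π / L * (L / π) := by field_simp
        _ ≤ |ξ| * (L / π) := by gcongr
    rw [h4, mul_assoc]
    exact le_mul_of_one_le_right (by positivity) this
  calc halvingBound σ μ t ξ ≤ Real.exp (-a * ξ ^ 2) * ξ ^ 4 * C := by
        rw [halvingBound, ← ha_def, mul_assoc]
        gcongr
        calc σ ^ 2 * ξ ^ 4 / 32 + |μ| * |ξ| ^ 3 / 8
            ≤ σ ^ 2 * ξ ^ 4 / 32 + |μ| * (ξ ^ 4 * (L / π)) / 8 := by gcongr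
          _ = ξ ^ 4 * C := by ring
    _ ≤ 6 / (a ^ 3 * ξ ^ 2) * C := by gcongr; exact exp_neg_mul_sq_mul_pow_four_le ha hξne
    _ = 6 * C * L ^ 2 / (a ^ 3 * π ^ 2) * ((j : ℝ) ^ 2)⁻¹ := by
        rw [← sq_abs ξ, hξ]; field_simp

lemma norm_halvingDefect_le {σ μ t L h K : ℝ} (ht : 0 ≤ t) (hh : 0 < h) (hK : 0 ≤ K)
    (hbound : ∀ (j : ℕ) (ξ : ℝ), |ξ| = π * j / L → halvingBound σ μ t ξ ≤ K * ((j : ℝ) ^ 2)⁻¹)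
    {N k : ℕ} (hN : h * N = 2 * L) (hk : k < N) :
    ‖halvingDefect σ μ t h (2 * π * k / N)‖ ≤
      t * h ^ 2 * K * (((k : ℝ) ^ 2)⁻¹ + (((N - k : ℕ) : ℝ) ^ 2)⁻¹) +
        Real.exp (-(4 * t * σ ^ 2 / h ^ 2)) := by
  have hN₀ : (0 : ℝ) < N := by exact_mod_cast (Nat.zero_le k).trans_lt hk
  have hL : 0 < L := by nlinarith
  have hkN : (k : ℝ) < N := by exact_mod_cast hk
  have hθ₀ : 0 ≤ 2 * π * k / N := by positivity
  have hkey {j : ℕ} {ξ : ℝ} (hξ : |ξ| = π * j / L) {A : ℝ} (hA : 0 ≤ A) :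
      t * h ^ 2 * halvingBound σ μ t ξ ≤ t * h ^ 2 * K * (((j : ℝ) ^ 2)⁻¹ + A) := by
    rw [mul_assoc _ K]
    gcongr
    exact (hbound j ξ hξ).trans (by gcongr; linarith)
  rcases le_or_gt (2 * k) N with hlow | hhigh
  · have hθ : 2 * π * k / N ≤ π := by
      rw [div_le_iff₀ hN₀]
      have : (2 * k : ℝ) ≤ N := by exact_mod_cast hlow
      nlinarith [pi_pos]
    refine (norm_halvingDefect_le_of_le_pi ht hh hθ₀ hθ).trans (add_le_add_left ?_ _)
    refine hkey ?_ (by positivity)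
    rw [abs_of_nonneg (by positivity)]
    field_simp
    linear_combination -(k : ℝ) * hN
  · have hθ : π ≤ 2 * π * k / N := by
      rw [le_div_iff₀ hN₀]
      have : (N : ℝ) < 2 * k := by exact_mod_cast hhigh
      nlinarith [pi_pos]
    have hθ₂ : 2 * π * k / N ≤ 2 * π := by
      rw [div_le_iff₀ hN₀]; nlinarith [pi_pos]
    refine (norm_halvingDefect_le_of_pi_le ht hh hθ hθ₂).trans (add_le_add_left ?_ _)
    rw [add_comm (((k : ℝ) ^ 2)⁻¹)]
    refine hkey ?_ (by positivity)
    rw [Nat.cast_sub hk.le, abs_div, abs_of_pos hh, abs_of_nonpos (by linarith)]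
    field_simp
    linear_combination -((N : ℝ) - k) * hN

lemma hstep_mul_two_pow (L : ℝ) (m : ℕ) : hstep L m * 2 ^ (m + 1) = 2 * L := by
  rw [hstep, pow_succ]; field_simp

lemma hstep_succ (L : ℝ) (m : ℕ) : hstep L (m + 1) = hstep L m / 2 := by
  rw [hstep, hstep, pow_succ, div_div]

lemma ofReal_kernel_const_eq_sum (L σ μ t : ℝ) (m : ℕ) (x y : ZMod (2 ^ (m + 1))) :
    (kernel L (fun _ => σ) (fun _ => μ) m t x y : ℂ) =
      (2 * L : ℂ)⁻¹ * ∑ k ∈ range (2 ^ (m + 1)),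
        cexp (t * genSymbol σ μ (hstep L m) (2 * π * k / 2 ^ (m + 1))) *
          ZMod.stdAddChar ((k : ZMod (2 ^ (m + 1))) * (x - y)) := by
  have hgen : gen L (fun _ => σ) (fun _ => μ) m = periodicTridiag (2 ^ (m + 1))
      (σ ^ 2 / (2 * hstep L m ^ 2) + μ / (2 * hstep L m))
      (σ ^ 2 / (2 * hstep L m ^ 2) - μ / (2 * hstep L m)) (-σ ^ 2 / hstep L m ^ 2) := rfl
  rw [kernel, hgen, Complex.ofReal_mul, exp_periodicTridiag_apply, ← mul_assoc,
    sum_zmod_eq_sum_range]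
  congr 1
  · push_cast
    rw [← mul_inv]
    exact_mod_cast congrArg Inv.inv (hstep_mul_two_pow L m)
  · refine sum_congr rfl fun k hk => ?_
    rw [tridiagSymbol_eq_genSymbol, ZMod.val_cast_of_lt (mem_range.mp hk)]
    push_cast; rfl

lemma stdAddChar_mul_embed_sub (m k : ℕ) (x y : ZMod (2 ^ (m + 1))) :
    ZMod.stdAddChar ((k : ZMod (2 ^ (m + 1 + 1))) * (embed m (m + 1) x - embed m (m + 1) y)) =
      ZMod.stdAddChar ((k : ZMod (2 ^ (m + 1))) * (x - y)) := by
  have hfine : (k : ZMod (2 ^ (m + 1 + 1))) * (embed m (m + 1) x - embed m (m + 1) y) =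
      ((k * (2 * x.val - 2 * y.val) : ℤ) : ZMod (2 ^ (m + 1 + 1))) := by
    simp [embed]
  have hcoarse : (k : ZMod (2 ^ (m + 1))) * (x - y) =
      ((k * (x.val - y.val) : ℤ) : ZMod (2 ^ (m + 1))) := by
    push_cast [ZMod.natCast_val, ZMod.cast_id]; rfl
  rw [hfine, hcoarse, ZMod.stdAddChar_coe, ZMod.stdAddChar_coe]
  congr 1
  push_cast
  field_simp
  ring

lemma ofReal_kernel_sub_kernel_succ_embed_eq_sum (L σ μ t : ℝ) (m : ℕ) (x y : ZMod (2 ^ (m + 1))) :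
    ((kernel L (fun _ => σ) (fun _ => μ) m t x y -
        kernel L (fun _ => σ) (fun _ => μ) (m + 1) t (embed m (m + 1) x) (embed m (m + 1) y) : ℝ) :
        ℂ) =
      (2 * L : ℂ)⁻¹ * ∑ k ∈ range (2 ^ (m + 1)),
        halvingDefect σ μ t (hstep L m) (2 * π * k / 2 ^ (m + 1)) *
          ZMod.stdAddChar ((k : ZMod (2 ^ (m + 1))) * (x - y)) := by
  have hsplit (f : ℕ → ℂ) : ∑ k ∈ range (2 ^ (m + 1 + 1)), f k =
      ∑ k ∈ range (2 ^ (m + 1)), f k + ∑ k ∈ range (2 ^ (m + 1)), f (2 ^ (m + 1) + k) := by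
    rw [← sum_range_add, ← two_mul, ← pow_succ']
  have hwrap (k : ℕ) : ((2 ^ (m + 1) + k : ℕ) : ZMod (2 ^ (m + 1))) = k := by
    rw [Nat.cast_add, ZMod.natCast_self, zero_add]
  push_cast
  rw [ofReal_kernel_const_eq_sum, ofReal_kernel_const_eq_sum, hstep_succ, hsplit, ← mul_sub,
    ← sum_add_distrib, ← sum_sub_distrib]
  congr 1
  refine sum_congr rfl fun k _ => ?_
  rw [stdAddChar_mul_embed_sub, stdAddChar_mul_embed_sub, hwrap]
  have hθ₁ : 2 * π * (k : ℝ) / 2 ^ (m + 1 + 1) = 2 * π * k / 2 ^ (m + 1) / 2 := by ring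
  have hθ₂ : 2 * π * ((2 ^ (m + 1) + k : ℕ) : ℝ) / 2 ^ (m + 1 + 1) =
      2 * π * k / 2 ^ (m + 1) / 2 + π := by
    push_cast; field_simp; ring
  rw [hθ₁, hθ₂, halvingDefect]
  ring

lemma abs_kernel_sub_kernel_succ_embed_le {σ μ t L K : ℝ} (ht : 0 ≤ t) (hL : 0 < L) (hK : 0 ≤ K)
    (hbound : ∀ (j : ℕ) (ξ : ℝ), |ξ| = π * j / L → halvingBound σ μ t ξ ≤ K * ((j : ℝ) ^ 2)⁻¹)
    (m : ℕ) (x y : ZMod (2 ^ (m + 1))) :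
    |kernel L (fun _ => σ) (fun _ => μ) m t x y -
        kernel L (fun _ => σ) (fun _ => μ) (m + 1) t (embed m (m + 1) x) (embed m (m + 1) y)| ≤
      (2 * L)⁻¹ * (4 * t * K * hstep L m ^ 2 +
        2 ^ (m + 1) * Real.exp (-(4 * t * σ ^ 2 / hstep L m ^ 2))) := by
  set h := hstep L m
  have hh : 0 < h := div_pos hL (by positivity)
  have hN : h * ((2 ^ (m + 1) : ℕ) : ℝ) = 2 * L := by push_cast; exact hstep_mul_two_pow L m
  have hterm (k : ℕ) (hk : k ∈ range (2 ^ (m + 1))) :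
      ‖halvingDefect σ μ t h (2 * π * k / 2 ^ (m + 1)) *
          ZMod.stdAddChar ((k : ZMod (2 ^ (m + 1))) * (x - y))‖ ≤
        t * h ^ 2 * K * (((k : ℝ) ^ 2)⁻¹ + (((2 ^ (m + 1) - k : ℕ) : ℝ) ^ 2)⁻¹) +
          Real.exp (-(4 * t * σ ^ 2 / h ^ 2)) := by
    rw [norm_mul, ZMod.stdAddChar_apply, Circle.norm_coe, mul_one]
    exact_mod_cast norm_halvingDefect_le ht hh hK hbound hN (mem_range.mp hk)
  have h2L : ‖(2 * L : ℂ)‖ = 2 * L := by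
    rw [norm_mul, Complex.norm_ofNat, Complex.norm_real, Real.norm_of_nonneg hL.le]
  rw [← Real.norm_eq_abs, ← Complex.norm_real, ofReal_kernel_sub_kernel_succ_embed_eq_sum,
    norm_mul, norm_inv, h2L]
  gcongr
  refine (norm_sum_le _ _).trans ((sum_le_sum hterm).trans ?_)
  rw [sum_add_distrib, ← mul_sum, sum_const, card_range, nsmul_eq_mul]
  have hsum := mul_le_mul_of_nonneg_left (sum_range_inv_sq_add_inv_sq_sub_le (2 ^ (m + 1)))
    (by positivity : 0 ≤ t * h ^ 2 * K)
  push_cast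
  linarith

lemma two_pow_mul_exp_neg_le {σ t L : ℝ} (hσ : σ ≠ 0) (ht : 0 < t) (hL : 0 < L) (m : ℕ) :
    2 ^ (m + 1) * Real.exp (-(4 * t * σ ^ 2 / hstep L m ^ 2)) ≤
      3 * L ^ 4 / (16 * t ^ 3 * σ ^ 6) * hstep L m ^ 2 := by
  set h := hstep L m
  have hh : 0 < h := div_pos hL (by positivity)
  have hhL : h ≤ L := div_le_self hL.le (one_le_pow₀ one_le_two)
  have hN : (2 : ℝ) ^ (m + 1) = 2 * L / h := by
    rw [eq_div_iff hh.ne', mul_comm]; exact hstep_mul_two_pow L m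
  have hexp := Real.exp_neg_le_factorial_div_pow (z := 4 * t * σ ^ 2 / h ^ 2) (by positivity) 3
  calc 2 ^ (m + 1) * Real.exp (-(4 * t * σ ^ 2 / h ^ 2))
      ≤ 2 * L / h * ((Nat.factorial 3 : ℝ) / (4 * t * σ ^ 2 / h ^ 2) ^ 3) := by
        rw [hN]; gcongr
    _ = 3 * L / (16 * t ^ 3 * σ ^ 6) * h ^ 3 * h ^ 2 := by
        rw [show (Nat.factorial 3 : ℝ) = 6 by norm_num [Nat.factorial]]
        field_simp
        ring
    _ ≤ 3 * L / (16 * t ^ 3 * σ ^ 6) * L ^ 3 * h ^ 2 := by gcongr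
    _ = 3 * L ^ 4 / (16 * t ^ 3 * σ ^ 6) * h ^ 2 := by ring

theorem thm_kernel_convergence_const_general
    (L : ℝ) (hL : 0 < L) (σ μ : ℝ) (hσ : 0 < σ)
    (m₀ : ℕ)
    (t : ℝ) (ht : 0 < t) :
    ∃ c > 0, ∀ m : ℕ, m₀ ≤ m → ∀ x y : ZMod (2 ^ (m + 1)),
      |kernel L (fun _ => σ) (fun _ => μ) m t x y -
          kernel L (fun _ => σ) (fun _ => μ) (m + 1) t (embed m (m + 1) x) (embed m (m + 1) y)|
        ≤ c * hstep L m ^ 2 := by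
  obtain ⟨K, hK, hbound⟩ := exists_halvingBound_le σ μ hσ.ne' ht hL
  set C := 3 * L ^ 4 / (16 * t ^ 3 * σ ^ 6)
  refine ⟨(4 * t * K + C) / (2 * L), by positivity, fun m _ x y => ?_⟩
  calc _ ≤ (2 * L)⁻¹ * (4 * t * K * hstep L m ^ 2 +
          2 ^ (m + 1) * Real.exp (-(4 * t * σ ^ 2 / hstep L m ^ 2))) :=
        abs_kernel_sub_kernel_succ_embed_le ht.le hL hK hbound m x y
    _ ≤ (2 * L)⁻¹ * (4 * t * K * hstep L m ^ 2 + C * hstep L m ^ 2) := by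
        gcongr _ * (_ + ?_)
        exact two_pow_mul_exp_neg_le hσ.ne' ht hL m
    _ = (4 * t * K + C) / (2 * L) * hstep L m ^ 2 := by ring

/-- Constant coefficients: kernel convergence at consecutive resolutions,
`|u_m(x,y;t) - u_{m+1}(x,y;t)| ≤ c·h_m²`. -/
theorem thm_kernel_convergence_const
    (L : ℝ) (hL : 0 < L) (σ μ : ℝ) (hσ : 0 < σ)
    (m₀ : ℕ) (hm₀ : ∀ m, m₀ ≤ m → hstep L m * |μ| < σ ^ 2)
    (t : ℝ) (ht : 0 < t) :
    ∃ c > 0, ∀ m : ℕ, m₀ ≤ m → ∀ x y : ZMod (2 ^ (m + 1)),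
      |kernel L (fun _ => σ) (fun _ => μ) m t x y -
          kernel L (fun _ => σ) (fun _ => μ) (m + 1) t (embed m (m + 1) x) (embed m (m + 1) y)|
        ≤ c * hstep L m ^ 2 :=
  thm_kernel_convergence_const_general L hL σ μ hσ m₀ t ht
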